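/- arXiv:1504.08137 — 2 statements merged into one kernel-verified Lean document; each statement's English description precedes it below -/
import Mathlib

section
/- Let G = (V,E) be a finite directed graph on vertex set V (self-loops allowed, no parallel edges). Fix κ ∈ (0,1) and integers k ≤ M ≤ N with (1 - 1/√k)^k < κ and N > 2M²κ⁻³. Assume |V| > N, at most κ|V| vertices have out-degree less than k, and every vertex has in-degree at most M. Let W ⊆ V be a random subset including each vertex independently with probability 1/√k. Then with probability at least 1 − κ, the set W is 3κ-dominating (i.e., the number of vertices v with no out-edge into W is at most 3κ|V|) and |W| ≤ (2/√k)|V|. -/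
open MeasureTheory

/-- The law of a `p`-Bernoulli random subset of a finite set `V`, encoded as a
measure on `V → Bool`: each vertex is included independently with probability `p`. -/
noncomputable def bernoulliSubsetMeasure (V : Type*) [Fintype V] (p : ℝ) :
    Measure (V → Bool) :=
  Measure.sum fun W : V → Bool =>
    (ENNReal.ofReal (∏ v, if W v = true then p else 1 - p)) • Measure.dirac W

/-!
With `p = 1/√k`, the number `X` of vertices having no out-neighbour in `W` and the size `Y = |W|`
are both counts of events "`W` avoids `S`" resp. "`W` contains `S`" for fixed vertex sets `S`
(out-neighbourhoods, resp. singletons), of probability `(1-p)^|S|` resp. `p^|S|`. Events with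
disjoint sets are independent, so the variance of such a count is at most
`∑_{u,v} |S_u ∩ S_v| ≤ |V| M²` when every vertex lies in at most `M` of the sets. Since
`E X ≤ κ|V| + |V|(1-p)^k ≤ 2κ|V|` and `E Y = p|V|`, Chebyshev's inequality bounds
`P(X > 3κ|V|)` by `M²/(κ²|V|)` and `P(Y > 2p|V|)` by `k/|V|`, both at most `κ/2` because
`|V| > 2M²κ⁻³`.
-/

open Finset

theorem sum_sum_card_inter_le {α ι : Type*} [Fintype α] [Fintype ι] [DecidableEq α]
    (S : ι → Finset α) (M : ℕ) (hM : ∀ a, #{i | a ∈ S i} ≤ M) :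
    ∑ i, ∑ j, #(S i ∩ S j) ≤ Fintype.card α * M ^ 2 := by
  calc ∑ i, ∑ j, #(S i ∩ S j)
      = ∑ i, ∑ j, ∑ a, (if a ∈ S i then 1 else 0) * (if a ∈ S j then 1 else 0) := by
        simp_rw [ite_zero_mul_ite_zero, mul_one, sum_boole, ← mem_inter, filter_mem_eq_inter,
          univ_inter, Nat.cast_id]
    _ = ∑ a, ∑ i, ∑ j, (if a ∈ S i then 1 else 0) * (if a ∈ S j then 1 else 0) :=
        (sum_congr rfl fun i _ => sum_comm).trans sum_comm
    _ = ∑ a, #{i | a ∈ S i} ^ 2 := by simp_rw [card_filter, sq, sum_mul_sum]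
    _ ≤ ∑ _a : α, M ^ 2 := by gcongr with a; exact hM a
    _ = Fintype.card α * M ^ 2 := by rw [sum_const, card_univ, smul_eq_mul]

section WeightedSums

variable {α : Type*} (s : Finset α) (w : α → ℝ)

theorem sum_filter_lt_mul_sq_le (X : α → ℝ) (hw : ∀ a ∈ s, 0 ≤ w a) {m t c : ℝ}
    (ht : 0 ≤ t) (hc : m + t ≤ c) :
    (∑ a ∈ s with c < X a, w a) * t ^ 2 ≤ ∑ a ∈ s, w a * (X a - m) ^ 2 := by
  rw [sum_mul]
  refine (sum_le_sum fun a ha => ?_).trans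
    (sum_le_sum_of_subset_of_nonneg (filter_subset _ s) fun a ha _ => ?_)
  · obtain ⟨has, hlt⟩ := mem_filter.mp ha
    have : t ≤ X a - m := by linarith
    gcongr
    exact hw a has
  · exact mul_nonneg (hw a ha) (sq_nonneg _)

theorem sum_sub_sum_filter_not_sub_sum_filter_not_le (hw : ∀ a ∈ s, 0 ≤ w a)
    (P Q : α → Prop) [DecidablePred P] [DecidablePred Q] :
    ∑ a ∈ s, w a - ∑ a ∈ s with ¬ P a, w a - ∑ a ∈ s with ¬ Q a, w a
      ≤ ∑ a ∈ s with P a ∧ Q a, w a := by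
  simp only [sum_filter, ← sum_sub_distrib]
  gcongr with a ha
  have := hw a ha
  split_ifs <;> first | linarith | tauto

theorem sum_mul_sub_sq (X : α → ℝ) (m : ℝ) :
    ∑ a ∈ s, w a * (X a - m) ^ 2
      = ∑ a ∈ s, w a * X a ^ 2 - 2 * m * ∑ a ∈ s, w a * X a + m ^ 2 * ∑ a ∈ s, w a := by
  simp only [mul_sum, ← sum_sub_distrib, ← sum_add_distrib]
  exact sum_congr rfl fun a _ => by ring

end WeightedSums

theorem pow_card_union_sub_pow_mul_pow_le {α : Type*} [DecidableEq α] {q : ℝ} (hq0 : 0 ≤ q)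
    (hq1 : q ≤ 1) (A B : Finset α) :
    q ^ #(A ∪ B) - q ^ #A * q ^ #B ≤ #(A ∩ B) := by
  rcases (A ∩ B).eq_empty_or_nonempty with hAB | hAB
  · rw [card_union_of_disjoint (disjoint_iff_inter_eq_empty.mpr hAB), pow_add, hAB]
    simp
  · have : (1 : ℝ) ≤ #(A ∩ B) := by exact_mod_cast hAB.card_pos
    have : q ^ #(A ∪ B) ≤ 1 := pow_le_one₀ hq0 hq1
    have : 0 ≤ q ^ #A * q ^ #B := by positivity
    linarith

theorem sum_pow_le_card_filter_lt_add {ι : Type*} [Fintype ι] {q : ℝ} (hq0 : 0 ≤ q)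
    (hq1 : q ≤ 1) (d : ι → ℕ) (k : ℕ) :
    ∑ i, q ^ d i ≤ #{i | d i < k} + Fintype.card ι * q ^ k := by
  calc ∑ i, q ^ d i ≤ ∑ i, ((if d i < k then 1 else 0) + q ^ k) := by
        gcongr with i
        split_ifs with h
        · linarith [pow_le_one₀ (n := d i) hq0 hq1, pow_nonneg hq0 k]
        · simpa using pow_le_pow_of_le_one hq0 hq1 (not_lt.mp h)
    _ = #{i | d i < k} + Fintype.card ι * q ^ k := by
        rw [sum_add_distrib, sum_boole, sum_const, card_univ, nsmul_eq_mul]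

namespace BernoulliSubset

variable {V ι : Type*} [Fintype V] {p : ℝ}

-- Expectations under `bernoulliSubsetMeasure V p` are the sums `∑ W, weight p W * f W`.
noncomputable def weight (p : ℝ) (W : V → Bool) : ℝ := ∏ v, if W v = true then p else 1 - p

theorem weight_nonneg (hp0 : 0 ≤ p) (hp1 : p ≤ 1) (W : V → Bool) : 0 ≤ weight p W :=
  prod_nonneg fun v _ => by split <;> linarith

variable [DecidableEq V]

theorem measure_setOf (hp0 : 0 ≤ p) (hp1 : p ≤ 1) (P : (V → Bool) → Prop)
    [DecidablePred P] :
    bernoulliSubsetMeasure V p {W | P W} = ENNReal.ofReal (∑ W with P W, weight p W) := by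
  have hP : MeasurableSet {W : V → Bool | P W} := (Set.to_countable _).measurableSet
  rw [bernoulliSubsetMeasure, Measure.sum_apply _ hP, tsum_fintype, sum_filter,
    ENNReal.ofReal_sum_of_nonneg fun W _ => by split <;> simp [weight_nonneg hp0 hp1]]
  refine sum_congr rfl fun W _ => ?_
  by_cases h : P W <;> simp [Measure.dirac_apply' _ hP, h, weight]

theorem sum_weight_mul_prod (p : ℝ) (f : V → Bool → ℝ) :
    ∑ W, weight p W * ∏ v, f v (W v) = ∏ v, (p * f v true + (1 - p) * f v false) := by
  have : ∀ v, p * f v true + (1 - p) * f v false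
      = ∑ b, (if b = true then p else 1 - p) * f v b := fun v => by simp
  simp_rw [this, Fintype.prod_sum, weight, ← prod_mul_distrib]

theorem sum_weight (p : ℝ) : ∑ W : V → Bool, weight p W = 1 := by
  simpa using sum_weight_mul_prod (V := V) p fun _ _ => 1

theorem sum_weight_mul_indicator (p : ℝ) (b : Bool) (S : Finset V) :
    ∑ W, weight p W * (if ∀ v ∈ S, W v = b then 1 else 0)
      = (if b = true then p else 1 - p) ^ #S := by
  have : ∀ W : V → Bool, (if ∀ v ∈ S, W v = b then (1 : ℝ) else 0)
      = ∏ v, if v ∈ S then (if W v = b then 1 else 0) else 1 := fun W => by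
    rw [prod_ite_mem, univ_inter, prod_boole]; congr
  rw [sum_congr rfl fun W _ => congrArg _ (this W),
    sum_weight_mul_prod p fun v c => if v ∈ S then (if c = b then 1 else 0) else 1,
    ← prod_const, ← univ_inter S, ← prod_ite_mem]
  refine prod_congr rfl fun v _ => ?_
  by_cases hv : v ∈ S <;> cases b <;> simp [hv]

variable [Fintype ι]

theorem sum_weight_mul_card_sub_sq_le (hp0 : 0 ≤ p) (hp1 : p ≤ 1) (b : Bool)
    (S : ι → Finset V) :
    ∑ W, weight p W * ((#{i | ∀ v ∈ S i, W v = b} : ℝ)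
        - ∑ i, (if b = true then p else 1 - p) ^ #(S i)) ^ 2
      ≤ ∑ i, ∑ j, (#(S i ∩ S j) : ℝ) := by
  set q := if b = true then p else 1 - p
  have hq0 : 0 ≤ q := by positivity
  have hq1 : q ≤ 1 := by cases b <;> simp [q] <;> linarith
  set ind : ι → (V → Bool) → ℝ := fun i W => if ∀ v ∈ S i, W v = b then 1 else 0
  have hmul : ∀ i j W, ind i W * ind j W = if ∀ v ∈ S i ∪ S j, W v = b then 1 else 0 := by
    intro i j W
    rw [ite_zero_mul_ite_zero, mul_one]
    exact if_congr forall_mem_union.symm rfl rfl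
  have hmean : ∑ W, weight p W * ∑ i, ind i W = ∑ i, q ^ #(S i) := by
    simp_rw [mul_sum]
    rw [sum_comm]
    exact sum_congr rfl fun i _ => sum_weight_mul_indicator p b (S i)
  have hsq : ∑ W, weight p W * (∑ i, ind i W) ^ 2 = ∑ i, ∑ j, q ^ #(S i ∪ S j) := by
    simp_rw [sq, sum_mul_sum, hmul, mul_sum]
    rw [sum_comm]
    refine sum_congr rfl fun i _ => ?_
    rw [sum_comm]
    exact sum_congr rfl fun j _ => sum_weight_mul_indicator p b _
  simp_rw [natCast_card_filter]
  calc _ = ∑ i, ∑ j, (q ^ #(S i ∪ S j) - q ^ #(S i) * q ^ #(S j)) := by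
        rw [sum_mul_sub_sq, hmean, hsq, sum_weight]
        simp_rw [sum_sub_distrib]
        rw [← sum_mul_sum]
        ring
    _ ≤ _ := sum_le_sum fun i _ => sum_le_sum fun j _ =>
        pow_card_union_sub_pow_mul_pow_le hq0 hq1 _ _

theorem tail_card_agree_le (hp0 : 0 ≤ p) (hp1 : p ≤ 1) (b : Bool) (S : ι → Finset V)
    {M : ℕ} (hM : ∀ v, #{i | v ∈ S i} ≤ M) {t c : ℝ} (ht : 0 < t)
    (hc : ∑ i, (if b = true then p else 1 - p) ^ #(S i) + t ≤ c) :
    ∑ W with c < #{i | ∀ v ∈ S i, W v = b}, weight p W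
      ≤ Fintype.card V * M ^ 2 / t ^ 2 := by
  rw [le_div_iff₀ (by positivity)]
  calc _ ≤ _ := sum_filter_lt_mul_sq_le _ _ _ (fun W _ => weight_nonneg hp0 hp1 W) ht.le hc
    _ ≤ ∑ i, ∑ j, (#(S i ∩ S j) : ℝ) := sum_weight_mul_card_sub_sq_le hp0 hp1 b S
    _ ≤ Fintype.card V * M ^ 2 := by exact_mod_cast sum_sum_card_inter_le S M hM

theorem tail_card_undominated_le (hp0 : 0 ≤ p) (hp1 : p ≤ 1) (E : Finset (V × V)) (k M : ℕ)
    (hin : ∀ v, #{u | (u, v) ∈ E} ≤ M) {t c : ℝ} (ht : 0 < t)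
    (hc : #{v | #{w | (v, w) ∈ E} < k} + Fintype.card V * (1 - p) ^ k + t ≤ c) :
    ∑ W with c < #{v | ∀ w, W w = true → (v, w) ∉ E}, weight p W
      ≤ Fintype.card V * M ^ 2 / t ^ 2 := by
  have hmean := sum_pow_le_card_filter_lt_add (by linarith : 0 ≤ 1 - p) (by linarith)
    (fun v => #{w | (v, w) ∈ E}) k
  have := tail_card_agree_le hp0 hp1 false (fun v => {w | (v, w) ∈ E}) (M := M) (c := c)
    (by simpa using hin) ht (by simp only [Bool.false_eq_true, if_false]; linarith)
  convert this using 6 with W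
  ext v
  simp only [mem_filter, mem_univ, true_and]
  exact forall_congr' fun w => by cases W w <;> simp

theorem tail_card_le (hp0 : 0 ≤ p) (hp1 : p ≤ 1) {t c : ℝ} (ht : 0 < t)
    (hc : Fintype.card V * p + t ≤ c) :
    ∑ W : V → Bool with c < #{v | W v = true}, weight p W ≤ Fintype.card V / t ^ 2 := by
  have := tail_card_agree_le hp0 hp1 true (fun v : V => {v}) (M := 1) (c := c)
    (by simp [filter_eq]) ht (by simpa [mul_comm] using hc)
  convert this using 6 with W
  · ext v
    simp
  · simp

end BernoulliSubset

open BernoulliSubset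

theorem bernoulli_subset_dominating_general
    {V : Type*} [Fintype V] [DecidableEq V] (E : Finset (V × V))
    (κ : ℝ) (hκ0 : 0 < κ) (hκ1 : κ < 1) (k M N : ℕ)
    (hkM : k ≤ M)
    (hκk : (1 - 1 / Real.sqrt k) ^ k < κ)
    (hN : (N : ℝ) > 2 * (M : ℝ) ^ 2 * κ⁻¹ ^ 3)
    (hV : Fintype.card V > N)
    (hout : ((Finset.univ.filter fun v : V =>
        (Finset.univ.filter fun w : V => (v, w) ∈ E).card < k).card : ℝ)
        ≤ κ * Fintype.card V)
    (hin : ∀ v : V, (Finset.univ.filter fun u : V => (u, v) ∈ E).card ≤ M) :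
    bernoulliSubsetMeasure V (1 / Real.sqrt k)
      {W : V → Bool |
        (((Finset.univ.filter fun v : V =>
            ∀ w : V, W w = true → (v, w) ∉ E).card : ℝ)
          ≤ 3 * κ * Fintype.card V) ∧
        (((Finset.univ.filter fun v : V => W v = true).card : ℝ)
          ≤ 2 / Real.sqrt k * Fintype.card V)}
      ≥ ENNReal.ofReal (1 - κ) := by
  set p := 1 / Real.sqrt k with hp
  set n := (Fintype.card V : ℝ)
  have hk : 1 ≤ k := Nat.one_le_iff_ne_zero.mpr fun hk => by simp [hk] at hκk; linarith
  have hp0 : 0 < p := by positivity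
  have hp1 : p ≤ 1 :=
    div_le_one_of_le₀ (Real.one_le_sqrt.mpr (by exact_mod_cast hk)) (by positivity)
  have hpk : p ^ 2 * k = 1 := by
    rw [hp, div_pow, Real.sq_sqrt (by positivity)]; field_simp
  have hNn : (N : ℝ) < n := Nat.cast_lt.mpr hV
  have hMn : 2 * (M : ℝ) ^ 2 < κ ^ 3 * n := by
    rw [inv_pow, ← div_eq_mul_inv, gt_iff_lt, div_lt_iff₀ (by positivity)] at hN
    nlinarith
  have hkn : 2 * (k : ℝ) ≤ κ * n := by
    have : (k : ℝ) ≤ M ^ 2 := by exact_mod_cast hkM.trans (Nat.le_self_pow two_ne_zero M)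
    nlinarith [pow_le_of_le_one hκ0.le hκ1.le (by norm_num : 3 ≠ 0)]
  have hn0 : 0 < n := (Nat.cast_nonneg N).trans_lt hNn
  have hdom := tail_card_undominated_le hp0.le hp1 E k M hin (t := κ * n) (c := 3 * κ * n)
    (by positivity) (by nlinarith [mul_le_mul_of_nonneg_left hκk.le hn0.le])
  have hsize := tail_card_le (V := V) hp0.le hp1 (t := p * n) (c := 2 / Real.sqrt k * n)
    (by positivity) (le_of_eq (by rw [hp]; ring))
  rw [ge_iff_le, measure_setOf hp0.le hp1]
  refine ENNReal.ofReal_le_ofReal (le_trans ?_ (sum_sub_sum_filter_not_sub_sum_filter_not_le _ _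
    (fun W _ => weight_nonneg hp0.le hp1 W) _ _))
  simp only [not_le, sum_weight]
  have h1 : n * M ^ 2 / (κ * n) ^ 2 ≤ κ / 2 := by
    rw [div_le_iff₀ (by positivity)]; nlinarith
  have h2 : n / (p * n) ^ 2 ≤ κ / 2 := by
    rw [div_le_iff₀ (by positivity)]
    nlinarith [mul_le_mul_of_nonneg_left hkn (by positivity : 0 ≤ p ^ 2 * n)]
  linarith

/-- Lemma: for a `(κ,k,M)`-regular finite directed graph with `|V| > N`, where
`(1-1/√k)^k < κ` and `N > 2M²κ⁻³`, a `1/√k`-Bernoulli random subset `W` is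
`3κ`-dominating and has size at most `(2/√k)|V|` with probability at least `1 - κ`. -/
theorem bernoulli_subset_dominating
    {V : Type*} [Fintype V] [DecidableEq V] (E : Finset (V × V))
    (κ : ℝ) (hκ0 : 0 < κ) (hκ1 : κ < 1) (k M N : ℕ)
    (hkM : k ≤ M) (hMN : M ≤ N)
    (hκk : (1 - 1 / Real.sqrt k) ^ k < κ)
    (hN : (N : ℝ) > 2 * (M : ℝ) ^ 2 * κ⁻¹ ^ 3)
    (hV : Fintype.card V > N)
    (hout : ((Finset.univ.filter fun v : V =>
        (Finset.univ.filter fun w : V => (v, w) ∈ E).card < k).card : ℝ)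
        ≤ κ * Fintype.card V)
    (hin : ∀ v : V, (Finset.univ.filter fun u : V => (u, v) ∈ E).card ≤ M) :
    bernoulliSubsetMeasure V (1 / Real.sqrt k)
      {W : V → Bool |
        (((Finset.univ.filter fun v : V =>
            ∀ w : V, W w = true → (v, w) ∉ E).card : ℝ)
          ≤ 3 * κ * Fintype.card V) ∧
        (((Finset.univ.filter fun v : V => W v = true).card : ℝ)
          ≤ 2 / Real.sqrt k * Fintype.card V)}
      ≥ ENNReal.ofReal (1 - κ) :=
  bernoulli_subset_dominating_general E κ hκ0 hκ1 k M N hkM hκk hN hV hout hin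
end

section
/- Let G be a countable group acting by the shift on X = χ^G, where χ is a compact metric space with metric d. Let δ > 0 and F₁ ⊆ F₂ ⋐ G with F₂ = F₂⁻¹. Suppose x ∈ X satisfies stab_{δ,F₁}(x) ∩ F₁ = stab_{δ,F₂²}(x) ∩ F₁. Then for every g ∈ F₂, g·(stab_{δ,F₁}(x) ∩ F₁)·g⁻¹ ⊆ stab_{δ,F₁}(g·x). -/
open Pointwise

/-- The `(δ,F)`-approximate stabilizer of a point `x ∈ χ^G` under the shift action
`(g·x)_h = x_{g⁻¹h}`. -/
def approxStab {G χ : Type*} [Group G] [MetricSpace χ]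
    (δ : ℝ) (F : Finset G) (x : G → χ) : Set G :=
  {g : G | ∀ h ∈ F, dist (x h) (x (g⁻¹ * h)) < δ}

section ApproxStab

variable {G χ : Type*} [Group G] [MetricSpace χ]

theorem approxStab_anti {δ : ℝ} {F F' : Finset G} (h : F ⊆ F') (x : G → χ) :
    approxStab δ F' x ⊆ approxStab δ F x :=
  fun _ hg k hk => hg k (h hk)

theorem conj_mem_approxStab_shift_iff [DecidableEq G] {δ : ℝ} {F : Finset G} {x : G → χ}
    {g f : G} :
    g * f * g⁻¹ ∈ approxStab δ F (fun h => x (g⁻¹ * h)) ↔ f ∈ approxStab δ (g⁻¹ • F) x := by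
  have conj_inv : ∀ h : G, g⁻¹ * ((g * f * g⁻¹)⁻¹ * h) = f⁻¹ * (g⁻¹ * h) := fun h => by group
  simp only [approxStab, Set.mem_ofPred_eq, ← Finset.image_smul, Finset.forall_mem_image,
    smul_eq_mul, conj_inv]

end ApproxStab

theorem Finset.smul_finset_subset_mul_of_inv_eq {G : Type*} [Group G] [DecidableEq G]
    {F₁ F₂ : Finset G} (hF : F₁ ⊆ F₂) (hsym : F₂⁻¹ = F₂) {g : G} (hg : g ∈ F₂) :
    g⁻¹ • F₁ ⊆ F₂ * F₂ := by
  have hg' : g⁻¹ ∈ F₂ := hsym ▸ Finset.inv_mem_inv hg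
  calc g⁻¹ • F₁ ⊆ g⁻¹ • F₂ := Finset.smul_finset_subset_smul_finset hF
    _ ⊆ F₂ * F₂ := Finset.smul_finset_subset_smul hg'

/-- If `F₁ ⊆ F₂ = F₂⁻¹` and `stab_{δ,F₁}(x) ∩ F₁ = stab_{δ,F₂²}(x) ∩ F₁`, then for
every `g ∈ F₂` the conjugate `g (stab_{δ,F₁}(x) ∩ F₁) g⁻¹` is contained in
`stab_{δ,F₁}(g·x)`, where `(g·x)_h = x_{g⁻¹h}`. -/
theorem conj_approxStab_subset
    {G χ : Type*} [Group G] [DecidableEq G] [MetricSpace χ]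
    (δ : ℝ) (F₁ F₂ : Finset G) (hF : F₁ ⊆ F₂) (hsym : F₂⁻¹ = F₂)
    (x : G → χ)
    (hx : approxStab δ F₁ x ∩ (F₁ : Set G) =
          approxStab δ (F₂ * F₂) x ∩ (F₁ : Set G)) :
    ∀ g ∈ F₂, ∀ f ∈ approxStab δ F₁ x ∩ (F₁ : Set G),
      g * f * g⁻¹ ∈ approxStab δ F₁ (fun h => x (g⁻¹ * h)) := by
  intro g hg f hf
  rw [hx] at hf
  exact conj_mem_approxStab_shift_iff.mpr <|
    approxStab_anti (Finset.smul_finset_subset_mul_of_inv_eq hF hsym hg) x hf.1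
end
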